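/- arXiv:2512.11051 — 2 statements merged into one kernel-verified Lean document; each statement's English description precedes it below -/
import Mathlib

section
/- For every C₀ > 0 and every q ∈ (0,1] there exists C₁ > 0 such that the following holds. Let θ ∈ (0,1) and T ∈ (1, θ^{-1/2}]. Let K₀, K₁ : [−T,0] → (−∞,0] be continuous, and let u₀, u₁ : [−T,0] → [0,∞) be differentiable with u_i'(t) = −u_i(t)² − K_i(t) for all t ∈ [−T,0] (i = 0,1). If |K₀(t) − K₁(t)| ≤ C₀·((u₀(t)^q + u₁(t)^q)·θ^{1/2} + θ) for all t ∈ [−T,0], then |u₀(0) − u₁(0)| ≤ C₁·(θ^{q/2} + T^{-1}). -/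
/-!
Let `Aᵢ` be the primitive of `uᵢ` vanishing at `-T`. The quadratic terms of the two Riccati
equations cancel in `φ = (u₀ - u₁) e^{A₀ + A₁}`, whose derivative is `(K₁ - K₀) e^{A₀ + A₁}`.
Since `Aᵢ` is nondecreasing and `u^q ≤ T^{-q} + T^{1-q} u`, the hypothesis on `K₀ - K₁` bounds
`|φ'|` by the derivative of an explicit combination of `s`, `e^{A₀(s)}` and `e^{A₁(s)}`, so
`|φ(0) - φ(-T)| ≤ 5 C₀ θ^{q/2} e^{A₀(0) + A₁(0)}`, using `T ≤ θ^{-1/2}`. The boundary term is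
controlled because `K ≤ 0` makes `u e^A` nondecreasing, whence `T u(-T) ≤ ∫ u e^A ≤ e^{A(0)}`.
-/

open Set Real

theorem rpow_le_rpow_neg_add_rpow_one_sub_mul {u L q : ℝ} (hu : 0 ≤ u) (hL : 0 < L)
    (hq₀ : 0 ≤ q) (hq₁ : q ≤ 1) : u ^ q ≤ L ^ (-q) + L ^ (1 - q) * u := by
  rcases le_or_gt u L⁻¹ with h | h
  · have : u ^ q ≤ L ^ (-q) := by
      rw [rpow_neg hL.le, ← inv_rpow hL.le]; exact rpow_le_rpow hu h hq₀
    have : 0 ≤ L ^ (1 - q) * u := by positivity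
    linarith
  · have hu₀ : 0 < u := (inv_pos.2 hL).trans h
    have : u ^ (q - 1) ≤ L ^ (1 - q) :=
      calc u ^ (q - 1) ≤ L⁻¹ ^ (q - 1) :=
            rpow_le_rpow_of_nonpos (inv_pos.2 hL) h.le (by linarith)
        _ = L ^ (1 - q) := by rw [inv_rpow hL.le, ← rpow_neg hL.le, neg_sub]
    have : u ^ q = u ^ (q - 1) * u := by rw [rpow_sub_one hu₀.ne', div_mul_cancel₀ _ hu₀.ne']
    have : 0 ≤ L ^ (-q) := by positivity
    nlinarith

theorem rpow_mul_exp_add_le {u x y x' y' L q : ℝ} (hu : 0 ≤ u) (hL : 0 < L) (hq₀ : 0 ≤ q)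
    (hq₁ : q ≤ 1) (hx : x ≤ x') (hy : y ≤ y') :
    u ^ q * exp (x + y) ≤ L ^ (-q) * exp (x' + y') + L ^ (1 - q) * exp y' * (u * exp x) :=
  calc u ^ q * exp (x + y) ≤ (L ^ (-q) + L ^ (1 - q) * u) * exp (x + y) := by
        gcongr; exact rpow_le_rpow_neg_add_rpow_one_sub_mul hu hL hq₀ hq₁
    _ = L ^ (-q) * exp (x + y) + L ^ (1 - q) * exp y * (u * exp x) := by rw [exp_add]; ring
    _ ≤ L ^ (-q) * exp (x' + y') + L ^ (1 - q) * exp y' * (u * exp x) := by gcongr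

theorem mul_rpow_one_sub_le_rpow {s T q : ℝ} (hs : 0 < s) (hT : 0 ≤ T) (hTs : T ≤ s⁻¹)
    (hq : q ≤ 1) : s * T ^ (1 - q) ≤ s ^ q :=
  calc s * T ^ (1 - q) ≤ s * s⁻¹ ^ (1 - q) := by gcongr
    _ = s ^ q := by
      rw [inv_rpow hs.le, ← rpow_neg hs.le, mul_comm, ← rpow_add_one hs.ne']; congr 1; ring

section Icc

variable {a b : ℝ}

theorem ContinuousOn.exists_hasDerivWithinAt_Icc {u : ℝ → ℝ} (hu : ContinuousOn u (Icc a b)) :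
    ∃ A : ℝ → ℝ, A a = 0 ∧ ∀ t ∈ Icc a b, HasDerivWithinAt A (u t) (Icc a b) t := by
  refine ⟨fun s => ∫ x in a..s, u x, intervalIntegral.integral_same, fun t ht => ?_⟩
  have : Fact (t ∈ Icc a b) := ⟨ht⟩
  exact intervalIntegral.integral_hasDerivWithinAt_right
    (hu.mono (uIcc_subset_Icc (left_mem_Icc.2 (ht.1.trans ht.2)) ht)).intervalIntegrable
    (hu.stronglyMeasurableAtFilter_nhdsWithin measurableSet_Icc t) (hu t ht)

theorem monotoneOn_Icc_of_hasDerivWithinAt_nonneg {f f' : ℝ → ℝ}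
    (hf : ∀ t ∈ Icc a b, HasDerivWithinAt f (f' t) (Icc a b) t)
    (hf' : ∀ t ∈ Icc a b, 0 ≤ f' t) : MonotoneOn f (Icc a b) :=
  monotoneOn_of_hasDerivWithinAt_nonneg (convex_Icc a b)
    (fun t ht => (hf t ht).continuousWithinAt)
    (fun t ht => by
      rw [interior_Icc] at ht ⊢
      exact (hf t (Ioo_subset_Icc_self ht)).mono Ioo_subset_Icc_self)
    (fun t ht => hf' t (interior_subset ht))

theorem abs_sub_le_sub_of_abs_hasDerivWithinAt_le {f f' g g' : ℝ → ℝ} (hab : a ≤ b)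
    (hf : ∀ t ∈ Icc a b, HasDerivWithinAt f (f' t) (Icc a b) t)
    (hg : ∀ t ∈ Icc a b, HasDerivWithinAt g (g' t) (Icc a b) t)
    (hfg : ∀ t ∈ Icc a b, |f' t| ≤ g' t) : |f b - f a| ≤ g b - g a := by
  have ha : a ∈ Icc a b := left_mem_Icc.2 hab
  have hb : b ∈ Icc a b := right_mem_Icc.2 hab
  have h₁ := monotoneOn_Icc_of_hasDerivWithinAt_nonneg (fun t ht => (hg t ht).sub (hf t ht))
    (fun t ht => by linarith [le_abs_self (f' t), hfg t ht]) ha hb hab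
  have h₂ := monotoneOn_Icc_of_hasDerivWithinAt_nonneg (fun t ht => (hg t ht).add (hf t ht))
    (fun t ht => by linarith [neg_abs_le (f' t), hfg t ht]) ha hb hab
  simp only [Pi.sub_apply, Pi.add_apply] at h₁ h₂
  rw [abs_le]
  constructor <;> linarith

end Icc

section Riccati

theorem hasDerivWithinAt_mul_exp_of_riccati {u K A : ℝ → ℝ} {s : Set ℝ} {t : ℝ}
    (hu : HasDerivWithinAt u (-(u t) ^ 2 - K t) s t) (hA : HasDerivWithinAt A (u t) s t) :
    HasDerivWithinAt (fun x => u x * exp (A x)) (-K t * exp (A t)) s t :=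
  (hu.mul hA.exp).congr_deriv (by ring)

theorem hasDerivWithinAt_riccati_sub_mul_exp {u₀ u₁ K₀ K₁ A₀ A₁ : ℝ → ℝ} {s : Set ℝ} {t : ℝ}
    (hu₀ : HasDerivWithinAt u₀ (-(u₀ t) ^ 2 - K₀ t) s t)
    (hu₁ : HasDerivWithinAt u₁ (-(u₁ t) ^ 2 - K₁ t) s t)
    (hA₀ : HasDerivWithinAt A₀ (u₀ t) s t) (hA₁ : HasDerivWithinAt A₁ (u₁ t) s t) :
    HasDerivWithinAt (fun x => (u₀ x - u₁ x) * exp (A₀ x + A₁ x))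
      ((K₁ t - K₀ t) * exp (A₀ t + A₁ t)) s t :=
  ((hu₀.sub hu₁).mul (hA₀.add hA₁).exp).congr_deriv
    (by simp only [Pi.add_apply, Pi.sub_apply]; ring)

variable {a b q α β : ℝ} {u K A u₀ u₁ K₀ K₁ A₀ A₁ : ℝ → ℝ}

theorem riccati_sub_mul_le_exp_sub_one (hab : a ≤ b) (hK : ∀ t ∈ Icc a b, K t ≤ 0)
    (hu : ∀ t ∈ Icc a b, HasDerivWithinAt u (-(u t) ^ 2 - K t) (Icc a b) t)
    (hA : ∀ t ∈ Icc a b, HasDerivWithinAt A (u t) (Icc a b) t) (hAa : A a = 0) :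
    (b - a) * u a ≤ exp (A b) - 1 := by
  have ha : a ∈ Icc a b := left_mem_Icc.2 hab
  have hmono : MonotoneOn (fun x => u x * exp (A x)) (Icc a b) :=
    monotoneOn_Icc_of_hasDerivWithinAt_nonneg
      (fun t ht => hasDerivWithinAt_mul_exp_of_riccati (hu t ht) (hA t ht))
      (fun t ht => mul_nonneg (neg_nonneg.2 (hK t ht)) (exp_nonneg _))
  have hderiv (t : ℝ) (ht : t ∈ Icc a b) : HasDerivWithinAt (fun x => exp (A x) - (x - a) * u a)
      (u t * exp (A t) - u a) (Icc a b) t :=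
    ((hA t ht).exp.sub (((hasDerivWithinAt_id t _).sub_const a).mul_const (u a))).congr_deriv
      (by ring)
  have := monotoneOn_Icc_of_hasDerivWithinAt_nonneg hderiv
    (fun t ht => by simpa [hAa] using hmono ha ht ht.1) ha (right_mem_Icc.2 hab) hab
  simp only [hAa, sub_self, zero_mul, sub_zero, exp_zero] at this
  linarith

theorem abs_riccati_sub_mul_exp_sub_le (hab : a < b) (hq₀ : 0 ≤ q) (hq₁ : q ≤ 1) (hα : 0 ≤ α)
    (hβ : 0 ≤ β) (hu₀ : ∀ t ∈ Icc a b, 0 ≤ u₀ t) (hu₁ : ∀ t ∈ Icc a b, 0 ≤ u₁ t)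
    (hd₀ : ∀ t ∈ Icc a b, HasDerivWithinAt u₀ (-(u₀ t) ^ 2 - K₀ t) (Icc a b) t)
    (hd₁ : ∀ t ∈ Icc a b, HasDerivWithinAt u₁ (-(u₁ t) ^ 2 - K₁ t) (Icc a b) t)
    (hK : ∀ t ∈ Icc a b, |K₀ t - K₁ t| ≤ α * (u₀ t ^ q + u₁ t ^ q) + β)
    (hA₀ : ∀ t ∈ Icc a b, HasDerivWithinAt A₀ (u₀ t) (Icc a b) t)
    (hA₁ : ∀ t ∈ Icc a b, HasDerivWithinAt A₁ (u₁ t) (Icc a b) t)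
    (hA₀a : A₀ a = 0) (hA₁a : A₁ a = 0) :
    |(u₀ b - u₁ b) * exp (A₀ b + A₁ b) - (u₀ a - u₁ a)| ≤
      (4 * α * (b - a) ^ (1 - q) + β * (b - a)) * exp (A₀ b + A₁ b) := by
  set L := b - a with hL_def
  have hL : 0 < L := sub_pos.2 hab
  have hb : b ∈ Icc a b := right_mem_Icc.2 hab.le
  have hA₀le (t : ℝ) (ht : t ∈ Icc a b) : A₀ t ≤ A₀ b :=
    monotoneOn_Icc_of_hasDerivWithinAt_nonneg hA₀ hu₀ ht hb ht.2
  have hA₁le (t : ℝ) (ht : t ∈ Icc a b) : A₁ t ≤ A₁ b :=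
    monotoneOn_Icc_of_hasDerivWithinAt_nonneg hA₁ hu₁ ht hb ht.2
  set E := exp (A₀ b + A₁ b)
  set c := (2 * α * L ^ (-q) + β) * E
  set d := α * L ^ (1 - q)
  have hG (t : ℝ) (ht : t ∈ Icc a b) : HasDerivWithinAt
      (fun x => c * x + d * (exp (A₁ b) * exp (A₀ x) + exp (A₀ b) * exp (A₁ x)))
      (c + d * (exp (A₁ b) * (u₀ t * exp (A₀ t)) + exp (A₀ b) * (u₁ t * exp (A₁ t))))
      (Icc a b) t :=
    (((hasDerivWithinAt_id t _).const_mul c).add ((((hA₀ t ht).exp.const_mul _).add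
      ((hA₁ t ht).exp.const_mul _)).const_mul d)).congr_deriv (by ring)
  have hbound (t : ℝ) (ht : t ∈ Icc a b) : |(K₁ t - K₀ t) * exp (A₀ t + A₁ t)| ≤
      c + d * (exp (A₁ b) * (u₀ t * exp (A₀ t)) + exp (A₀ b) * (u₁ t * exp (A₁ t))) := by
    have e₀ := rpow_mul_exp_add_le (hu₀ t ht) hL hq₀ hq₁ (hA₀le t ht) (hA₁le t ht)
    have e₁ := rpow_mul_exp_add_le (hu₁ t ht) hL hq₀ hq₁ (hA₁le t ht) (hA₀le t ht)
    have e : exp (A₀ t + A₁ t) ≤ E := exp_le_exp.2 (add_le_add (hA₀le t ht) (hA₁le t ht))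
    rw [abs_mul, abs_sub_comm, abs_of_pos (exp_pos _)]
    calc |K₀ t - K₁ t| * exp (A₀ t + A₁ t)
        ≤ (α * (u₀ t ^ q + u₁ t ^ q) + β) * exp (A₀ t + A₁ t) := by gcongr; exact hK t ht
      _ = α * (u₀ t ^ q * exp (A₀ t + A₁ t)) + α * (u₁ t ^ q * exp (A₁ t + A₀ t))
          + β * exp (A₀ t + A₁ t) := by rw [add_comm (A₁ t)]; ring
      _ ≤ α * (L ^ (-q) * E + L ^ (1 - q) * exp (A₁ b) * (u₀ t * exp (A₀ t)))
          + α * (L ^ (-q) * exp (A₁ b + A₀ b) + L ^ (1 - q) * exp (A₀ b) * (u₁ t * exp (A₁ t)))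
          + β * E := by gcongr
      _ = _ := by rw [add_comm (A₁ b)]; ring
  have hcomp := abs_sub_le_sub_of_abs_hasDerivWithinAt_le hab.le
    (fun t ht => hasDerivWithinAt_riccati_sub_mul_exp (hd₀ t ht) (hd₁ t ht) (hA₀ t ht) (hA₁ t ht))
    hG hbound
  simp only [hA₀a, hA₁a, add_zero, exp_zero, mul_one, ← exp_add, add_comm (A₁ b)] at hcomp
  have hcL : c * b - c * a = (2 * α * L ^ (1 - q) + β * L) * E := by
    rw [show 1 - q = -q + 1 by ring, rpow_add_one hL.ne', ← mul_sub, ← hL_def]; ring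
  have hd : 0 ≤ d * (exp (A₁ b) + exp (A₀ b)) := by positivity
  linarith

theorem abs_riccati_sub_le (hab : a < b) (hq₀ : 0 ≤ q) (hq₁ : q ≤ 1) (hα : 0 ≤ α) (hβ : 0 ≤ β)
    (hK₀ : ∀ t ∈ Icc a b, K₀ t ≤ 0) (hK₁ : ∀ t ∈ Icc a b, K₁ t ≤ 0)
    (hu₀ : ∀ t ∈ Icc a b, 0 ≤ u₀ t) (hu₁ : ∀ t ∈ Icc a b, 0 ≤ u₁ t)
    (hd₀ : ∀ t ∈ Icc a b, HasDerivWithinAt u₀ (-(u₀ t) ^ 2 - K₀ t) (Icc a b) t)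
    (hd₁ : ∀ t ∈ Icc a b, HasDerivWithinAt u₁ (-(u₁ t) ^ 2 - K₁ t) (Icc a b) t)
    (hK : ∀ t ∈ Icc a b, |K₀ t - K₁ t| ≤ α * (u₀ t ^ q + u₁ t ^ q) + β) :
    |u₀ b - u₁ b| ≤ 2 / (b - a) + 4 * α * (b - a) ^ (1 - q) + β * (b - a) := by
  have hL : 0 < b - a := sub_pos.2 hab
  have ha : a ∈ Icc a b := left_mem_Icc.2 hab.le
  obtain ⟨A₀, hA₀a, hA₀⟩ := ContinuousOn.exists_hasDerivWithinAt_Icc fun t ht =>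
    (hd₀ t ht).continuousWithinAt
  obtain ⟨A₁, hA₁a, hA₁⟩ := ContinuousOn.exists_hasDerivWithinAt_Icc fun t ht =>
    (hd₁ t ht).continuousWithinAt
  have hcomp := abs_riccati_sub_mul_exp_sub_le hab hq₀ hq₁ hα hβ hu₀ hu₁ hd₀ hd₁ hK hA₀ hA₁
    hA₀a hA₁a
  have h₀ := riccati_sub_mul_le_exp_sub_one hab.le hK₀ hd₀ hA₀ hA₀a
  have h₁ := riccati_sub_mul_le_exp_sub_one hab.le hK₁ hd₁ hA₁ hA₁a
  have hua : u₀ a + u₁ a ≤ 2 / (b - a) * exp (A₀ b + A₁ b) := by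
    have : 0 ≤ (b - a) * u₀ a := mul_nonneg hL.le (hu₀ a ha)
    have : 0 ≤ (b - a) * u₁ a := mul_nonneg hL.le (hu₁ a ha)
    rw [div_mul_eq_mul_div, le_div_iff₀ hL, exp_add]
    nlinarith
  have hΔa : |u₀ a - u₁ a| ≤ u₀ a + u₁ a :=
    abs_sub_le_iff.2 ⟨by linarith [hu₁ a ha], by linarith [hu₀ a ha]⟩
  have hΔb := abs_sub_abs_le_abs_sub ((u₀ b - u₁ b) * exp (A₀ b + A₁ b)) (u₀ a - u₁ a)
  rw [abs_mul, abs_of_pos (exp_pos _)] at hΔb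
  rw [← mul_le_mul_iff_of_pos_right (exp_pos (A₀ b + A₁ b))]
  linarith

end Riccati

/-- Key estimate (4.2) in the proof of Theorem 4.5 (logarithmic modulus of continuity
of the Green bundles): for nonnegative Riccati solutions `uᵢ' = -uᵢ² - Kᵢ` on `[-T,0]`
with `1 < T ≤ θ^{-1/2}`, `Kᵢ ≤ 0`, and `|K₀ - K₁| ≤ C₀((u₀^q + u₁^q)θ^{1/2} + θ)`,
one has `|u₀(0) - u₁(0)| ≤ C₁ (θ^{q/2} + T⁻¹)`. -/
theorem riccati_log_modulus_comparison
    (C₀ q : ℝ) (hC₀ : 0 < C₀) (hq : q ∈ Set.Ioc (0:ℝ) 1) :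
    ∃ C₁ : ℝ, 0 < C₁ ∧ ∀ θ : ℝ, θ ∈ Set.Ioo (0:ℝ) 1 →
      ∀ T : ℝ, 1 < T → T ≤ (Real.sqrt θ)⁻¹ →
      ∀ K₀ K₁ u₀ u₁ : ℝ → ℝ,
        ContinuousOn K₀ (Set.Icc (-T) 0) → ContinuousOn K₁ (Set.Icc (-T) 0) →
        (∀ t ∈ Set.Icc (-T) 0, K₀ t ≤ 0) → (∀ t ∈ Set.Icc (-T) 0, K₁ t ≤ 0) →
        (∀ t ∈ Set.Icc (-T) 0, 0 ≤ u₀ t) → (∀ t ∈ Set.Icc (-T) 0, 0 ≤ u₁ t) →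
        (∀ t ∈ Set.Icc (-T) 0,
          HasDerivWithinAt u₀ (-(u₀ t) ^ 2 - K₀ t) (Set.Icc (-T) 0) t) →
        (∀ t ∈ Set.Icc (-T) 0,
          HasDerivWithinAt u₁ (-(u₁ t) ^ 2 - K₁ t) (Set.Icc (-T) 0) t) →
        (∀ t ∈ Set.Icc (-T) 0,
          |K₀ t - K₁ t| ≤ C₀ * ((u₀ t ^ q + u₁ t ^ q) * Real.sqrt θ + θ)) →
        |u₀ 0 - u₁ 0| ≤ C₁ * (θ ^ (q / 2) + T⁻¹) := by
  obtain ⟨hq₀, hq₁⟩ := hq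
  refine ⟨5 * C₀ + 2, by linarith,
    fun θ hθ T hT hTθ K₀ K₁ u₀ u₁ _ _ hK₀ hK₁ hu₀ hu₁ hd₀ hd₁ hK => ?_⟩
  have hs : 0 < √θ := sqrt_pos.2 hθ.1
  have hbound := abs_riccati_sub_le (α := C₀ * √θ) (β := C₀ * θ) (by linarith) hq₀.le hq₁
    (mul_nonneg hC₀.le hs.le) (mul_nonneg hC₀.le hθ.1.le) hK₀ hK₁ hu₀ hu₁ hd₀ hd₁
    (fun t ht => (hK t ht).trans_eq (by ring))
  rw [zero_sub, neg_neg, div_eq_mul_inv] at hbound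
  have h₁ : √θ * T ^ (1 - q) ≤ θ ^ (q / 2) := by
    rw [show θ ^ (q / 2) = √θ ^ q by rw [sqrt_eq_rpow, ← rpow_mul hθ.1.le]; ring_nf]
    exact mul_rpow_one_sub_le_rpow hs (by linarith) hTθ hq₁
  have h₂ : θ * T ≤ √θ * T ^ (1 - q) :=
    calc θ * T = √θ * (√θ * T) := by rw [← mul_assoc, mul_self_sqrt hθ.1.le]
      _ ≤ √θ * T ^ (1 - q) := by
        gcongr
        exact ((mul_le_mul_of_nonneg_left hTθ hs.le).trans_eq (mul_inv_cancel₀ hs.ne')).trans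
          (one_le_rpow hT.le (by linarith))
  have := mul_le_mul_of_nonneg_left h₁ hC₀.le
  have := mul_le_mul_of_nonneg_left h₂ hC₀.le
  have := mul_nonneg hC₀.le (inv_nonneg.2 (zero_le_one.trans hT.le))
  have := rpow_nonneg hθ.1.le (q / 2)
  linarith
end

section
/- For every real α > 1/r there exist constants C > 1 and b₀ ∈ (0,1) such that for all c ∈ (1 − b₀, 1): C^{-1}·(1−c)^{-α} ≤ ∫_0^{ε₁} (ξ(s) − c)^{-α} ds ≤ C·(1−c)^{-α}. -/
/-!
Since `ξ ≥ 1` everywhere and `ξ = 1` on the flat part `[0, L]`, the integrand is at most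
`(1 - c)^{-α}` and equals it on `[0, L]`, so the integral lies between `L (1 - c)^{-α}` and
`ε₁ (1 - c)^{-α}`.
-/

open MeasureTheory Set Real

noncomputable section

/-- The profile of the surface of revolution: `ξ(s) = 1` for `s ≤ L` and
`ξ(s) = 1 + (s-L)^r` for `s ≥ L`. -/
def profileXi (r L : ℝ) (s : ℝ) : ℝ := if s ≤ L then 1 else 1 + (s - L) ^ r

lemma mul_le_intervalIntegral_of_eqOn {g : ℝ → ℝ} {L ε M : ℝ} (hL : 0 ≤ L) (hLε : L ≤ ε)
    (hgi : IntervalIntegrable g volume 0 ε) (hg : ∀ s ∈ Ioc 0 ε, 0 ≤ g s)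
    (heq : EqOn g (fun _ => M) (Icc 0 L)) :
    L * M ≤ ∫ s in 0..ε, g s :=
  calc L * M = ∫ s in 0..L, g s := by
        rw [intervalIntegral.integral_congr (by rwa [uIcc_of_le hL]),
          intervalIntegral.integral_const, sub_zero, smul_eq_mul]
    _ ≤ ∫ s in 0..ε, g s :=
        intervalIntegral.integral_mono_interval le_rfl hL hLε
          ((ae_restrict_iff' measurableSet_Ioc).2 (ae_of_all _ hg)) hgi

section Profile

variable {r L : ℝ}

lemma profileXi_of_le {s : ℝ} (hs : s ≤ L) : profileXi r L s = 1 := if_pos hs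

lemma one_le_profileXi (s : ℝ) : 1 ≤ profileXi r L s := by
  unfold profileXi
  split_ifs with hs
  · exact le_rfl
  · linarith [rpow_nonneg (sub_nonneg.2 (not_le.1 hs).le) r]

lemma measurable_profileXi : Measurable (profileXi r L) :=
  Measurable.ite measurableSet_Iic measurable_const (by fun_prop)

variable {α c : ℝ}

lemma profileXi_sub_pos (hc : c < 1) (s : ℝ) : 0 < profileXi r L s - c := by
  linarith [one_le_profileXi (r := r) (L := L) s]

lemma profileXi_sub_rpow_le (hα : 0 ≤ α) (hc : c < 1) (s : ℝ) :
    (profileXi r L s - c) ^ (-α) ≤ (1 - c) ^ (-α) :=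
  rpow_le_rpow_of_nonpos (sub_pos.2 hc) (by linarith [one_le_profileXi (r := r) (L := L) s])
    (neg_nonpos.2 hα)

lemma norm_profileXi_sub_rpow_le (hα : 0 ≤ α) (hc : c < 1) (s : ℝ) :
    ‖(profileXi r L s - c) ^ (-α)‖ ≤ (1 - c) ^ (-α) :=
  (norm_of_nonneg (rpow_nonneg (profileXi_sub_pos hc s).le _)).trans_le
    (profileXi_sub_rpow_le hα hc s)

lemma intervalIntegrable_profileXi_sub_rpow (hα : 0 ≤ α) (hc : c < 1) (a b : ℝ) :
    IntervalIntegrable (fun s => (profileXi r L s - c) ^ (-α)) volume a b :=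
  (intervalIntegrable_const (c := (1 - c) ^ (-α))).mono_fun'
    ((measurable_profileXi.sub_const c).pow_const (-α)).aestronglyMeasurable
    (ae_of_all _ (norm_profileXi_sub_rpow_le hα hc))

end Profile

/-- Integral asymptotics used in the proof of Lemma 3.2(3): for `α > 1/r`,
`∫₀^{ε₁} (ξ(s) - c)^{-α} ds ≈ (1-c)^{-α}` as `c ↑ 1`. -/
theorem profile_integral_asymptotics
    (r L ε₁ : ℝ) (hr : 4 < r) (hL : 0 < L) (hLε : L < ε₁)
    (α : ℝ) (hα : 1 / r < α) :
    ∃ C : ℝ, 1 < C ∧ ∃ b₀ : ℝ, b₀ ∈ Set.Ioo (0:ℝ) 1 ∧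
      ∀ c ∈ Set.Ioo (1 - b₀) 1,
        (1 - c) ^ (-α) / C ≤ (∫ s in (0:ℝ)..ε₁, (profileXi r L s - c) ^ (-α)) ∧
        (∫ s in (0:ℝ)..ε₁, (profileXi r L s - c) ^ (-α)) ≤ C * (1 - c) ^ (-α) := by
  have hα0 : 0 ≤ α := ((one_div_pos.2 (by linarith : (0:ℝ) < r)).trans hα).le
  set C := max ε₁ L⁻¹ + 1
  have hCε : ε₁ ≤ C := by linarith [le_max_left ε₁ L⁻¹]
  have hLC : 1 ≤ L * C :=
    (div_le_iff₀' hL).1 (by rw [one_div]; linarith [le_max_right ε₁ L⁻¹])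
  have hC : 1 < C := lt_add_of_pos_left 1 (lt_max_of_lt_left (hL.trans hLε))
  refine ⟨C, hC, 1 / 2, ⟨by norm_num, by norm_num⟩, fun c ⟨_, hc⟩ => ?_⟩
  have hM : 0 ≤ (1 - c) ^ (-α) := rpow_nonneg (sub_nonneg.2 hc.le) _
  constructor
  · calc (1 - c) ^ (-α) / C ≤ L * (1 - c) ^ (-α) := by
          rw [div_le_iff₀ (by linarith)]; nlinarith
      _ ≤ _ := mul_le_intervalIntegral_of_eqOn hL.le hLε.le
          (intervalIntegrable_profileXi_sub_rpow hα0 hc _ _)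
          (fun s _ => rpow_nonneg (profileXi_sub_pos hc s).le _)
          (fun s hs => by simp only [profileXi_of_le hs.2])
  · calc _ ≤ (1 - c) ^ (-α) * |ε₁ - 0| :=
          (le_abs_self _).trans (intervalIntegral.norm_integral_le_of_norm_le_const
            fun s _ => norm_profileXi_sub_rpow_le hα0 hc s)
      _ ≤ C * (1 - c) ^ (-α) := by
          rw [sub_zero, abs_of_pos (hL.trans hLε), mul_comm]
          exact mul_le_mul_of_nonneg_right hCε hM
end
end
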